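/- arXiv:2009.12291 — 5 statements merged into one kernel-verified Lean document; each statement's English description precedes it below -/
import Mathlib

section
/- Let E be a nonempty finite set, let c : E → ℝ satisfy c(e) > 0 for every e ∈ E, and let U ⊆ ℝ_{≥0}^E be a nonempty closed convex set. Then inf_{u ∈ U} max_{e ∈ E} u(e)/c(e) = sup { inf_{u ∈ U} Σ_{e ∈ E} λ(e)·u(e) : λ ∈ ℝ_{≥0}^E, Σ_{e ∈ E} λ(e)·c(e) = 1 }. (There is no duality gap between the minimum-congestion problem over U and its Lagrangian dual obtained by dualizing the capacity constraints.) -/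
/-!
Weak duality is the pointwise estimate `∑ λ e * u e ≤ (∑ λ e * c e) * max_e u e / c e`.
For strong duality, take `t` below the optimal congestion. Then `U` misses the open box
`{x | ∀ e, x e < t * c e}`, and Hahn–Banach separates the two convex sets by a linear functional
`x ↦ ∑ λ e * x e`. Since the box is a lower set, `λ ≥ 0`; since its corner `t • c` lies in its
closure, `t * ∑ λ e * c e ≤ ∑ λ e * u e` on `U`. Normalizing `λ` gives a dual value at least `t`.
-/

open Set

section Separation

variable {ι : Type*}

theorem ContinuousLinearMap.apply_eq_sum_apply_single [Fintype ι] [DecidableEq ι]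
    (φ : (ι → ℝ) →L[ℝ] ℝ) (x : ι → ℝ) : φ x = ∑ i, φ (Pi.single i 1) * x i := by
  conv_lhs => rw [← Finset.univ_sum_single x]
  refine (map_sum φ _ _).trans (Finset.sum_congr rfl fun i _ => ?_)
  rw [mul_comm, ← smul_eq_mul, ← map_smul, ← Pi.single_smul', smul_eq_mul, mul_one]

theorem LinearMap.apply_nonneg_of_bddAbove_image_of_isLowerSet {V : Type*} [AddCommGroup V]
    [PartialOrder V] [IsOrderedAddMonoid V] [Module ℝ V] [PosSMulMono ℝ V] (φ : V →ₗ[ℝ] ℝ)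
    {C : Set V} (hC : IsLowerSet C) (hCne : C.Nonempty) (hbdd : BddAbove (φ '' C)) {v : V}
    (hv : 0 ≤ v) : 0 ≤ φ v := by
  obtain ⟨x, hx⟩ := hCne
  obtain ⟨M, hM⟩ := hbdd
  by_contra! hneg
  -- moving from `x` down along `v` stays in `C` but pushes `φ` past `M`
  set r := (M - φ x + 1) / -φ v
  have hr : 0 ≤ r := div_nonneg (by linarith [hM (mem_image_of_mem φ hx)]) (by linarith)
  have hmem : x - r • v ∈ C := hC (sub_le_self x (smul_nonneg hr hv)) hx
  have hval : φ (x - r • v) = M + 1 := by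
    rw [map_sub, map_smul, smul_eq_mul, div_mul_eq_mul_div, div_neg,
      mul_div_cancel_right₀ _ hneg.ne]
    ring
  linarith [hM (mem_image_of_mem φ hmem)]

theorem le_of_forall_lt_on_pi_Iio {f : (ι → ℝ) → ℝ} (hf : Continuous f) {b : ι → ℝ} {s : ℝ}
    (h : ∀ x ∈ univ.pi fun i => Iio (b i), f x < s) : f b ≤ s := by
  have hb : b ∈ closure (univ.pi fun i => Iio (b i)) := by
    simp [closure_pi_set]
  exact (isClosed_le hf continuous_const).closure_subset_iff.2 (fun x hx => (h x hx).le) hb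

theorem exists_nonneg_weights_of_disjoint_pi_Iio [Fintype ι] {b : ι → ℝ} {U : Set (ι → ℝ)}
    (hUne : U.Nonempty) (hUconv : Convex ℝ U) (hdisj : Disjoint (univ.pi fun i => Iio (b i)) U) :
    ∃ w : ι → ℝ, (∀ i, 0 ≤ w i) ∧ w ≠ 0 ∧
      ∀ u ∈ U, ∑ i, w i * b i ≤ ∑ i, w i * u i := by
  classical
  set C := univ.pi fun i => Iio (b i)
  have hCne : C.Nonempty := ⟨b - 1, fun i _ => by simp⟩
  have hClower : IsLowerSet C := fun x y hyx hx i _ => (hyx i).trans_lt (hx i trivial)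
  obtain ⟨φ, s, hφC, hφU⟩ := geometric_hahn_banach_open
    (convex_pi fun i _ => convex_Iio (b i)) (isOpen_set_pi finite_univ fun i _ => isOpen_Iio)
    hUconv hdisj
  have hrepr := φ.apply_eq_sum_apply_single
  refine ⟨fun i => φ (Pi.single i 1), fun i => ?_, ?_, fun u hu => ?_⟩
  · exact LinearMap.apply_nonneg_of_bddAbove_image_of_isLowerSet φ hClower hCne
      ⟨s, by rintro _ ⟨x, hx, rfl⟩; exact (hφC x hx).le⟩ (Pi.single_nonneg.2 zero_le_one)
  · intro hw
    obtain ⟨x, hx⟩ := hCne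
    obtain ⟨u, hu⟩ := hUne
    have hφ : ∀ y, φ y = 0 := fun y => by
      simp [hrepr y, show ∀ i, φ (Pi.single i 1) = 0 from congr_fun hw]
    linarith [hφC x hx, hφU u hu, hφ x, hφ u]
  · rw [← hrepr, ← hrepr]
    exact (le_of_forall_lt_on_pi_Iio φ.continuous hφC).trans (hφU u hu)

end Separation

section Congestion

variable {E : Type*}

noncomputable def congestion (c u : E → ℝ) : ℝ := ⨆ e, u e / c e

theorem div_le_congestion [Finite E] (c u : E → ℝ) (e : E) : u e / c e ≤ congestion c u :=
  le_ciSup (f := fun e => u e / c e) (finite_range _).bddAbove e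

theorem congestion_nonneg {c u : E → ℝ} (hc : ∀ e, 0 ≤ c e) (hu : ∀ e, 0 ≤ u e) :
    0 ≤ congestion c u :=
  Real.iSup_nonneg fun e => div_nonneg (hu e) (hc e)

theorem congestion_lt_iff [Finite E] [Nonempty E] {c u : E → ℝ} (hc : ∀ e, 0 < c e) {t : ℝ} :
    congestion c u < t ↔ ∀ e, u e < t * c e := by
  obtain ⟨e₀, he₀⟩ := exists_eq_ciSup_of_finite (f := fun e => u e / c e)
  simp_rw [← div_lt_iff₀ (hc _)]
  refine ⟨fun h e => (div_le_congestion c u e).trans_lt h, fun h => ?_⟩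
  rw [congestion, ← he₀]
  exact h e₀

theorem sum_mul_le_congestion [Fintype E] {c lam : E → ℝ} (hc : ∀ e, 0 < c e)
    (hlam : ∀ e, 0 ≤ lam e) (hsum : ∑ e, lam e * c e = 1) (u : E → ℝ) :
    ∑ e, lam e * u e ≤ congestion c u :=
  calc ∑ e, lam e * u e = ∑ e, lam e * c e * (u e / c e) :=
        Finset.sum_congr rfl fun e _ => by field_simp [(hc e).ne']
    _ ≤ ∑ e, lam e * c e * congestion c u :=
        Finset.sum_le_sum fun e _ =>
          mul_le_mul_of_nonneg_left (div_le_congestion c u e) (mul_nonneg (hlam e) (hc e).le)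
    _ = congestion c u := by rw [← Finset.sum_mul, hsum, one_mul]

theorem exists_dual_multiplier_of_forall_lt_congestion [Fintype E] [Nonempty E] {c : E → ℝ}
    (hc : ∀ e, 0 < c e) {U : Set (E → ℝ)} (hUne : U.Nonempty) (hUconv : Convex ℝ U) {t : ℝ}
    (ht : ∀ u ∈ U, t < congestion c u) :
    ∃ lam : E → ℝ, (∀ e, 0 ≤ lam e) ∧ ∑ e, lam e * c e = 1 ∧ ∀ u ∈ U, t ≤ ∑ e, lam e * u e := by
  have hdisj : Disjoint (univ.pi fun e => Iio (t * c e)) U :=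
    disjoint_left.2 fun u hu huU =>
      (ht u huU).not_ge ((congestion_lt_iff hc).2 fun e => hu e trivial).le
  obtain ⟨w, hw0, hw, hwU⟩ := exists_nonneg_weights_of_disjoint_pi_Iio hUne hUconv hdisj
  set S := ∑ e, w e * c e
  have hS : 0 < S := by
    obtain ⟨e, he⟩ := Function.ne_iff.1 hw
    exact Finset.sum_pos' (fun e _ => mul_nonneg (hw0 e) (hc e).le)
      ⟨e, Finset.mem_univ e, mul_pos ((hw0 e).lt_of_ne' he) (hc e)⟩
  refine ⟨fun e => w e / S, fun e => div_nonneg (hw0 e) hS.le, ?_, fun u hu => ?_⟩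
  · simp_rw [div_mul_eq_mul_div, ← Finset.sum_div]
    exact div_self hS.ne'
  · simp_rw [div_mul_eq_mul_div, ← Finset.sum_div]
    rw [le_div_iff₀ hS, Finset.mul_sum]
    simpa only [mul_left_comm t] using hwU u hu

theorem sInf_image_sum_mul_le_sInf_image_congestion [Fintype E] {c lam : E → ℝ}
    (hc : ∀ e, 0 < c e) (hlam : ∀ e, 0 ≤ lam e) (hsum : ∑ e, lam e * c e = 1) {U : Set (E → ℝ)}
    (hUne : U.Nonempty) (hUnn : ∀ u ∈ U, ∀ e, 0 ≤ u e) :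
    sInf ((fun u : E → ℝ => ∑ e, lam e * u e) '' U) ≤ sInf (congestion c '' U) := by
  have hbdd : BddBelow ((fun u : E → ℝ => ∑ e, lam e * u e) '' U) :=
    ⟨0, by
      rintro _ ⟨u, hu, rfl⟩
      exact Finset.sum_nonneg fun e _ => mul_nonneg (hlam e) (hUnn u hu e)⟩
  refine le_csInf (hUne.image _) ?_
  rintro _ ⟨u, hu, rfl⟩
  exact (csInf_le hbdd (mem_image_of_mem _ hu)).trans (sum_mul_le_congestion hc hlam hsum u)

end Congestion

theorem congestion_strong_duality_general
    {E : Type*} [Fintype E] [Nonempty E]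
    (c : E → ℝ) (hc : ∀ e, 0 < c e)
    (U : Set (E → ℝ)) (hUne : U.Nonempty) (hUconv : Convex ℝ U)
    (hUnn : ∀ u ∈ U, ∀ e, 0 ≤ u e) :
    sInf ((fun u : E → ℝ => ⨆ e, u e / c e) '' U) =
      sSup {β : ℝ | ∃ lam : E → ℝ, (∀ e, 0 ≤ lam e) ∧ (∑ e, lam e * c e) = 1 ∧
        β = sInf ((fun u : E → ℝ => ∑ e, lam e * u e) '' U)} := by
  change sInf (congestion c '' U) = _
  set D := {β : ℝ | ∃ lam : E → ℝ, (∀ e, 0 ≤ lam e) ∧ (∑ e, lam e * c e) = 1 ∧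
        β = sInf ((fun u : E → ℝ => ∑ e, lam e * u e) '' U)}
  have hweak : ∀ β ∈ D, β ≤ sInf (congestion c '' U) := by
    rintro β ⟨lam, hlam, hsum, rfl⟩
    exact sInf_image_sum_mul_le_sInf_image_congestion hc hlam hsum hUne hUnn
  have hbdd : BddBelow (congestion c '' U) :=
    ⟨0, by rintro _ ⟨u, hu, rfl⟩; exact congestion_nonneg (fun e => (hc e).le) (hUnn u hu)⟩
  have hstrong : ∀ t < sInf (congestion c '' U), ∃ β ∈ D, t ≤ β := by
    intro t ht
    obtain ⟨lam, hlam, hsum, hlamU⟩ := exists_dual_multiplier_of_forall_lt_congestion hc hUne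
      hUconv fun u hu => ht.trans_le (csInf_le hbdd (mem_image_of_mem _ hu))
    refine ⟨_, ⟨lam, hlam, hsum, rfl⟩, le_csInf (hUne.image _) ?_⟩
    rintro _ ⟨u, hu, rfl⟩
    exact hlamU u hu
  obtain ⟨β₀, hβ₀, -⟩ := hstrong _ (sub_one_lt _)
  refine le_antisymm (le_of_forall_lt_imp_le_of_dense fun t ht => ?_) (csSup_le ⟨β₀, hβ₀⟩ hweak)
  obtain ⟨β, hβ, htβ⟩ := hstrong t ht
  exact htβ.trans (le_csSup ⟨_, hweak⟩ hβ)

/-- **No duality gap for the minimum-congestion problem.**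
`E` is a nonempty finite edge set, `c` strictly positive capacities, and
`U ⊆ ℝ_{≥0}^E` a nonempty closed convex set of feasible reservations.
The infimum of the congestion `max_e u e / c e` over `U` equals the supremum of
the Lagrangian dual values `inf_{u ∈ U} ∑_e λ e * u e` over all `λ ≥ 0` with
`∑_e λ e * c e = 1`. -/
theorem congestion_strong_duality
    {E : Type*} [Fintype E] [Nonempty E]
    (c : E → ℝ) (hc : ∀ e, 0 < c e)
    (U : Set (E → ℝ)) (hUne : U.Nonempty) (hUcl : IsClosed U) (hUconv : Convex ℝ U)
    (hUnn : ∀ u ∈ U, ∀ e, 0 ≤ u e) :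
    sInf ((fun u : E → ℝ => ⨆ e, u e / c e) '' U) =
      sSup {β : ℝ | ∃ lam : E → ℝ, (∀ e, 0 ≤ lam e) ∧ (∑ e, lam e * c e) = 1 ∧
        β = sInf ((fun u : E → ℝ => ∑ e, lam e * u e) '' U)} :=
  congestion_strong_duality_general c hc U hUne hUconv hUnn
end

section
/- Let E be a nonempty finite set, let c : E → ℝ satisfy c(e) > 0 for every e ∈ E, let U ⊆ ℝ_{≥0}^E be a nonempty closed convex set, and let β* = inf_{u ∈ U} max_{e∈E} u(e)/c(e). Let α ≥ 1, and suppose λ̃ ∈ ℝ_{≥0}^E satisfies Σ_{e∈E} λ̃(e)·c(e) = 1, ũ ∈ U satisfies Σ_{e∈E} λ̃(e)·ũ(e) ≤ α · inf_{u ∈ U} Σ_{e∈E} λ̃(e)·u(e) (i.e. ũ is an α-approximate minimizer of the linear cost λ̃ over U), and β̃ ∈ ℝ satisfies β* ≤ β̃ ≤ Σ_{e∈E} λ̃(e)·ũ(e). Then β* ≤ β̃ ≤ α·β*. (Thus the value returned by the cutting-plane algorithm driven by an α-approximation oracle for the linear-cost problem is an α-approximation of the minimum congestion.) -/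
/-! Since `∑ e, λ̃ e * c e = 1`, the cost `∑ e, λ̃ e * u e = ∑ e, (λ̃ e * c e) * (u e / c e)`
is a convex combination of the ratios `u e / c e`, hence at most the congestion of `u`. So the
optimal linear cost is at most `β*`, and
`β̃ ≤ ∑ e, λ̃ e * ũ e ≤ α * (optimal linear cost) ≤ α * β*`. -/

open Finset

theorem csInf_image_mono {α β : Type*} [ConditionallyCompleteLattice α] {s : Set β}
    {f g : β → α} (hf : BddBelow (f '' s)) (hfg : ∀ x ∈ s, f x ≤ g x) :
    sInf (f '' s) ≤ sInf (g '' s) := by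
  simp only [Set.image_eq_range] at hf ⊢
  exact ciInf_mono hf fun x => hfg x x.2

theorem sum_mul_le_sum_mul_ciSup_div {E : Type*} [Fintype E] {lam c : E → ℝ}
    (hlam : ∀ e, 0 ≤ lam e) (hc : ∀ e, 0 < c e) (u : E → ℝ) :
    ∑ e, lam e * u e ≤ (∑ e, lam e * c e) * ⨆ e, u e / c e := by
  rw [sum_mul]
  refine sum_le_sum fun e _ => ?_
  calc lam e * u e = lam e * c e * (u e / c e) := by field_simp [(hc e).ne']
    _ ≤ lam e * c e * ⨆ e, u e / c e :=
      mul_le_mul_of_nonneg_left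
        (le_ciSup (f := fun e => u e / c e) (Set.finite_range _).bddAbove e)
        (mul_nonneg (hlam e) (hc e).le)

theorem cutting_plane_alpha_approx_general
    {E : Type*} [Fintype E]
    (c : E → ℝ) (hc : ∀ e, 0 < c e)
    (U : Set (E → ℝ))
    (hUnn : ∀ u ∈ U, ∀ e, 0 ≤ u e)
    (α : ℝ) (hα : 1 ≤ α)
    (lam : E → ℝ) (hlam : ∀ e, 0 ≤ lam e) (hnorm : (∑ e, lam e * c e) = 1)
    (ut : E → ℝ)
    (happrox : (∑ e, lam e * ut e) ≤
      α * sInf ((fun u : E → ℝ => ∑ e, lam e * u e) '' U))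
    (βt : ℝ)
    (hβlow : sInf ((fun u : E → ℝ => ⨆ e, u e / c e) '' U) ≤ βt)
    (hβup : βt ≤ ∑ e, lam e * ut e) :
    sInf ((fun u : E → ℝ => ⨆ e, u e / c e) '' U) ≤ βt ∧
      βt ≤ α * sInf ((fun u : E → ℝ => ⨆ e, u e / c e) '' U) := by
  have hcost_bdd : BddBelow ((fun u : E → ℝ => ∑ e, lam e * u e) '' U) := by
    refine ⟨0, ?_⟩
    rintro _ ⟨u, hu, rfl⟩
    exact sum_nonneg fun e _ => mul_nonneg (hlam e) (hUnn u hu e)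
  have hcost_le_congestion : ∀ u ∈ U, ∑ e, lam e * u e ≤ ⨆ e, u e / c e := fun u _ => by
    simpa [hnorm] using sum_mul_le_sum_mul_ciSup_div hlam hc u
  refine ⟨hβlow, ?_⟩
  calc βt ≤ ∑ e, lam e * ut e := hβup
    _ ≤ α * sInf ((fun u : E → ℝ => ∑ e, lam e * u e) '' U) := happrox
    _ ≤ α * sInf ((fun u : E → ℝ => ⨆ e, u e / c e) '' U) :=
      mul_le_mul_of_nonneg_left (csInf_image_mono hcost_bdd hcost_le_congestion)
        (zero_le_one.trans hα)

/-- **The cutting-plane algorithm driven by an `α`-approximation oracle for the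
linear-cost problem returns an `α`-approximation of the minimum congestion.**
Here `β* = inf_{u ∈ U} max_e u e / c e` is the optimal congestion, `λ̃ ≥ 0` is a
cost vector normalized by `∑_e λ̃ e * c e = 1`, `ũ ∈ U` is an `α`-approximate
minimizer of the linear cost `∑_e λ̃ e * u e` over `U`, and
`β* ≤ β̃ ≤ ∑_e λ̃ e * ũ e`.  Then `β* ≤ β̃ ≤ α * β*`. -/
theorem cutting_plane_alpha_approx
    {E : Type*} [Fintype E] [Nonempty E]
    (c : E → ℝ) (hc : ∀ e, 0 < c e)
    (U : Set (E → ℝ)) (hUne : U.Nonempty) (hUcl : IsClosed U) (hUconv : Convex ℝ U)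
    (hUnn : ∀ u ∈ U, ∀ e, 0 ≤ u e)
    (α : ℝ) (hα : 1 ≤ α)
    (lam : E → ℝ) (hlam : ∀ e, 0 ≤ lam e) (hnorm : (∑ e, lam e * c e) = 1)
    (ut : E → ℝ) (hut : ut ∈ U)
    (happrox : (∑ e, lam e * ut e) ≤
      α * sInf ((fun u : E → ℝ => ∑ e, lam e * u e) '' U))
    (βt : ℝ)
    (hβlow : sInf ((fun u : E → ℝ => ⨆ e, u e / c e) '' U) ≤ βt)
    (hβup : βt ≤ ∑ e, lam e * ut e) :
    sInf ((fun u : E → ℝ => ⨆ e, u e / c e) '' U) ≤ βt ∧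
      βt ≤ α * sInf ((fun u : E → ℝ => ⨆ e, u e / c e) '' U) :=
  cutting_plane_alpha_approx_general c hc U hUnn α hα lam hlam hnorm ut happrox βt hβlow hβup
end

section
/- Fix ρ ∈ (0,1) and a 3-CNF formula φ with m ≥ 1 clauses over variables x_1,…,x_r. Define the instance (G_1, H_1, D_1): the graph G_1 has vertices s, t and, for each clause index i ∈ {1,…,m}, two internal vertices v_{i,1}, v_{i,2}, with edges e_{i,1} = {s, v_{i,1}}, e_{i,2} = {v_{i,1}, v_{i,2}}, e_{i,3} = {v_{i,2}, t}, every edge having capacity 1; the commodities are h_{i,j} with endpoints the two endpoints of e_{i,j} (for each i,j) together with one commodity h_0 with endpoints s and t; the demand polytope is D_1 = { d ∈ ℝ_{≥0}^{H_1} : there exists ξ ∈ [0,1]^{2r} indexed by the literals with ξ(x_k) + ξ(¬x_k) = 1 for each k, d_{h_{i,j}} = ξ(l_{i,j}) for all i,j, and 0 ≤ d_{h_0} ≤ m(1−ρ) }. Then: (a) if val(φ) = 1, the minimum dynamic congestion of (G_1,H_1,D_1) with unit capacities is at least 2 − ρ; and (b) if val(φ) < ρ, the minimum dynamic congestion is at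 most 1, i.e. the all-ones reservation belongs to U(D_1). -/
/-!
(a) Fix a satisfying assignment and a true literal `l_{i, j i}` in every clause. The demand
`d_{h₀} = m (1 - ρ)`, `d_{h_{i,j}} = [l_{i,j} is true]` lies in `D₁`. Each unit of a commodity
pays, along any route, at least the potential difference between its endpoints; pricing the cut
`{e_{i, j i}}` at 1, `h₀` and the `m` commodities `h_{i, j i}` together pay `m (1 - ρ) + m`, so
one of the `m` cut edges has reservation at least `2 - ρ`.

(b) Route each `h_{i,j}` on its own edge and split `h₀` over the `m` paths, path `i` having
room `1 - max_j ξ(l_{i,j})`. Under independent rounding of `ξ`, clause `i` is satisfied with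
probability at least `max_j ξ(l_{i,j})`, so the total room is at least `m` minus the expected
number of satisfied clauses, which exceeds `m (1 - ρ) ≥ d_{h₀}`.
-/

open scoped BigOperators

/-- Net flow out of vertex `v` for a single-commodity flow `f` on an undirected
graph whose edges `e` have endpoints `src e` and `dst e`; `f e true` is the flow
on `e` oriented from `src e` to `dst e`, `f e false` the flow on the opposite
orientation. -/
def netOut {V E : Type*} [Fintype E] [DecidableEq V]
    (src dst : E → V) (f : E → Bool → ℝ) (v : V) : ℝ :=
  ∑ e, ((if src e = v then f e true - f e false else 0) +
        (if dst e = v then f e false - f e true else 0))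

/-- `f` is a routing of the demand vector `d` under the reservation `u`:
each commodity flow is nonnegative, conserved at every vertex other than the
endpoints of the commodity, ships a net flow of `d h` out of `s h`, and the
total flow (in both directions) on each edge is at most `u e`. -/
def IsRouting {V E H : Type*} [Fintype E] [Fintype H] [DecidableEq V]
    (src dst : E → V) (s t : H → V) (d : H → ℝ) (u : E → ℝ)
    (f : H → E → Bool → ℝ) : Prop :=
  (∀ h e b, 0 ≤ f h e b) ∧
  (∀ h v, v ≠ s h → v ≠ t h → netOut src dst (f h) v = 0) ∧
  (∀ h, netOut src dst (f h) (s h) = d h) ∧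
  (∀ e, (∑ h, (f h e true + f h e false)) ≤ u e)

/-- `d` is routable under the reservation `u`. -/
def Routable {V E H : Type*} [Fintype E] [Fintype H] [DecidableEq V]
    (src dst : E → V) (s t : H → V) (d : H → ℝ) (u : E → ℝ) : Prop :=
  ∃ f, IsRouting src dst s t d u f


/-- The set of reservations under which every demand vector of `D` is routable. -/
def Uset {V E H : Type*} [Fintype E] [Fintype H] [DecidableEq V]
    (src dst : E → V) (s t : H → V) (D : Set (H → ℝ)) : Set (E → ℝ) :=
  {u | (∀ e, 0 ≤ u e) ∧ ∀ d ∈ D, Routable src dst s t d u}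

/-! ### The instance `(G₁, H₁, D₁)` built from a 3-CNF formula

The 3-CNF formula over variables `x_1, …, x_r` with `m` clauses is encoded by
`lit : Fin m → Fin 3 → Fin r × Bool`, where `lit i j = (k, b)` means that the
literal in position `j` of clause `i` is `x_k` if `b = true` and `¬x_k`
otherwise.  A truth assignment is `a : Fin r → Bool`, and it satisfies the
literal `(k, b)` iff `a k = b`.

Vertices: `Sum.inl false = s`, `Sum.inl true = t`, and `Sum.inr (i, k)` is the
`(k+1)`-st internal vertex `v_{i,k+1}` of the path of clause `i`.
Edges: `(i, j)` is the edge `e_{i,j+1}` of the path of clause `i`.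
Commodities: `none` is `h₀` (from `s` to `t`), `some (i,j)` is `h_{i,j+1}`,
whose endpoints are those of the edge `(i, j)`. -/

/-- Source of edge `(i, j)` of `G₁`. -/
def g1src (m : ℕ) (e : Fin m × Fin 3) : Bool ⊕ (Fin m × Fin 2) :=
  if h : e.2.val = 0 then Sum.inl false
  else Sum.inr (e.1, ⟨e.2.val - 1, by have := e.2.isLt; omega⟩)

/-- Target of edge `(i, j)` of `G₁`. -/
def g1dst (m : ℕ) (e : Fin m × Fin 3) : Bool ⊕ (Fin m × Fin 2) :=
  if h : e.2.val = 2 then Sum.inl true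
  else Sum.inr (e.1, ⟨e.2.val, by have := e.2.isLt; omega⟩)

/-- Source of a commodity of `G₁`. -/
def g1s (m : ℕ) : Option (Fin m × Fin 3) → Bool ⊕ (Fin m × Fin 2)
  | none => Sum.inl false
  | some e => g1src m e

/-- Target of a commodity of `G₁`. -/
def g1t (m : ℕ) : Option (Fin m × Fin 3) → Bool ⊕ (Fin m × Fin 2)
  | none => Sum.inl true
  | some e => g1dst m e

/-- The demand polytope `D₁`: demands are given by fractional literal values
`ξ` with `ξ(x_k) + ξ(¬x_k) = 1`, the demand of `h_{i,j}` equals the value of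
the literal `l_{i,j}`, and `0 ≤ d_{h₀} ≤ m (1 - ρ)`. -/
def D1 (m r : ℕ) (ρ : ℝ) (lit : Fin m → Fin 3 → Fin r × Bool) :
    Set (Option (Fin m × Fin 3) → ℝ) :=
  {d | ∃ ξ : Fin r × Bool → ℝ,
        (∀ l, 0 ≤ ξ l ∧ ξ l ≤ 1) ∧
        (∀ k : Fin r, ξ (k, true) + ξ (k, false) = 1) ∧
        (∀ i j, d (some (i, j)) = ξ (lit i j)) ∧
        0 ≤ d none ∧ d none ≤ (m : ℝ) * (1 - ρ)}

open Finset

section Flow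

variable {V E : Type*} [Fintype E] [DecidableEq V] {src dst : E → V}

lemma sum_mul_netOut (f : E → Bool → ℝ) (π : V → ℝ) (S : Finset V)
    (hsrc : ∀ e, src e ∈ S) (hdst : ∀ e, dst e ∈ S) :
    ∑ v ∈ S, π v * netOut src dst f v
      = ∑ e, (π (src e) - π (dst e)) * (f e true - f e false) := by
  unfold netOut
  simp only [mul_sum]
  rw [sum_comm]
  refine sum_congr rfl fun e _ => ?_
  simp only [mul_add, mul_ite, mul_zero, sum_add_distrib, sum_ite_eq, hsrc, hdst, if_true]
  ring

lemma mul_potential_sub_eq_sum {f : E → Bool → ℝ} {s t : V} {d : ℝ} (hst : s ≠ t)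
    (hcons : ∀ v, v ≠ s → v ≠ t → netOut src dst f v = 0)
    (hs : netOut src dst f s = d) (π : V → ℝ) :
    d * (π t - π s) = ∑ e, (π (dst e) - π (src e)) * (f e true - f e false) := by
  classical
  set S := insert s (insert t (univ.image src ∪ univ.image dst))
  have hsum : ∀ π : V → ℝ, π s * d + π t * netOut src dst f t
      = ∑ e, (π (src e) - π (dst e)) * (f e true - f e false) := fun π => by
    rw [← sum_mul_netOut f π S (by simp [S]) (by simp [S]), ← hs,
      ← sum_pair (f := fun v => π v * netOut src dst f v) hst]
    refine sum_subset (by simp [S, insert_subset_iff]) fun v _ hv => ?_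
    simp only [mem_insert, mem_singleton, not_or] at hv
    rw [hcons v hv.1 hv.2, mul_zero]
  have ht : netOut src dst f t = -d := by
    have := hsum 1
    simp only [Pi.one_apply, sub_self, zero_mul, sum_const_zero] at this
    linarith
  rw [ht] at hsum
  calc d * (π t - π s) = -(π s * d + π t * -d) := by ring
    _ = _ := by rw [hsum, ← sum_neg_distrib]; exact sum_congr rfl fun e _ => by ring

lemma mul_potential_sub_le {f : E → Bool → ℝ} {s t : V} {d : ℝ} (hf : ∀ e b, 0 ≤ f e b)
    (hcons : ∀ v, v ≠ s → v ≠ t → netOut src dst f v = 0)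
    (hs : netOut src dst f s = d) (π : V → ℝ) :
    d * (π t - π s) ≤ ∑ e, |π (dst e) - π (src e)| * (f e true + f e false) := by
  rcases eq_or_ne s t with rfl | hst
  · rw [sub_self, mul_zero]
    exact sum_nonneg fun e _ => mul_nonneg (abs_nonneg _) (add_nonneg (hf e _) (hf e _))
  rw [mul_potential_sub_eq_sum hst hcons hs π]
  refine sum_le_sum fun e _ => ?_
  calc (π (dst e) - π (src e)) * (f e true - f e false)
      ≤ |π (dst e) - π (src e)| * |f e true - f e false| := by
        rw [← abs_mul]; exact le_abs_self _
    _ ≤ |π (dst e) - π (src e)| * (f e true + f e false) := by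
        gcongr
        exact abs_sub_le_iff.2 ⟨by linarith [hf e false], by linarith [hf e true]⟩

theorem IsRouting.sum_mul_potential_sub_le {H : Type*} [Fintype H] {s t : H → V}
    {d : H → ℝ} {u : E → ℝ} {f : H → E → Bool → ℝ} (hf : IsRouting src dst s t d u f)
    (π : V → ℝ) :
    ∑ h, d h * (π (t h) - π (s h)) ≤ ∑ e, |π (dst e) - π (src e)| * u e := by
  obtain ⟨hf0, hcons, hval, hcap⟩ := hf
  calc ∑ h, d h * (π (t h) - π (s h))
      ≤ ∑ h, ∑ e, |π (dst e) - π (src e)| * (f h e true + f h e false) :=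
        sum_le_sum fun h _ => mul_potential_sub_le (hf0 h) (hcons h) (hval h) π
    _ = ∑ e, |π (dst e) - π (src e)| * ∑ h, (f h e true + f h e false) := by
        rw [sum_comm]; simp only [mul_sum]
    _ ≤ ∑ e, |π (dst e) - π (src e)| * u e :=
        sum_le_sum fun e _ => mul_le_mul_of_nonneg_left (hcap e) (abs_nonneg _)

lemma netOut_single [DecidableEq E] (src dst : E → V) (p : E) (c : ℝ) (v : V) :
    netOut src dst (fun e b => if e = p ∧ b = true then c else 0) v
      = (if src p = v then c else 0) - (if dst p = v then c else 0) := by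
  unfold netOut
  rw [sum_eq_single p (fun e _ he => by simp [he]) (fun h => absurd (mem_univ p) h)]
  split_ifs <;> simp

end Flow

section ProductWeight

variable {ν α : Type*} [Fintype ν] [DecidableEq ν] [Fintype α]

lemma sum_prod_apply_eq_one {p : ν → α → ℝ} (hp : ∀ k, ∑ x, p k x = 1) :
    ∑ a : ν → α, ∏ k, p k (a k) = 1 := by
  rw [← Fintype.prod_sum]; simp [hp]

lemma sum_filter_apply_eq_prod [DecidableEq α] {p : ν → α → ℝ} (hp : ∀ k, ∑ x, p k x = 1)
    (k₀ : ν) (x₀ : α) :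
    ∑ a : ν → α with a k₀ = x₀, ∏ k, p k (a k) = p k₀ x₀ := by
  let q : ν → α → ℝ := fun k x => if k = k₀ ∧ x ≠ x₀ then 0 else p k x
  have hq : ∀ a : ν → α, ∏ k, q k (a k) = if a k₀ = x₀ then ∏ k, p k (a k) else 0 := by
    intro a
    split_ifs with ha
    · exact prod_congr rfl fun k _ => if_neg fun hk => hk.2 (hk.1 ▸ ha)
    · exact prod_eq_zero (mem_univ k₀) (if_pos ⟨rfl, ha⟩)
  have hsum_q : ∀ k, ∑ x, q k x = if k = k₀ then p k₀ x₀ else 1 := by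
    intro k
    split_ifs with hk
    · subst hk; simp [q, ite_not]
    · simp [q, hk, hp]
  rw [sum_filter, ← Fintype.sum_congr _ _ hq, ← Fintype.prod_sum]
  simp [hsum_q]

end ProductWeight

theorem exists_assignment_sum_iSup_le_card {ι κ ν : Type*} [Fintype ι] [Fintype κ]
    [Nonempty κ] [Fintype ν] [DecidableEq ν] (lit : ι → κ → ν × Bool)
    [∀ a : ν → Bool, DecidablePred fun i => ∃ j, a (lit i j).1 = (lit i j).2] {ξ : ν × Bool → ℝ}
    (hξ0 : ∀ l, 0 ≤ ξ l) (hξ : ∀ k, ξ (k, true) + ξ (k, false) = 1) :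
    ∃ a : ν → Bool,
      ∑ i, ⨆ j, ξ (lit i j) ≤ #{i | ∃ j, a (lit i j).1 = (lit i j).2} := by
  let w : (ν → Bool) → ℝ := fun a => ∏ k, ξ (k, a k)
  let sat : (ν → Bool) → ℕ := fun a => #{i | ∃ j, a (lit i j).1 = (lit i j).2}
  have hp : ∀ k, ∑ b, ξ (k, b) = 1 := fun k => by rw [Fintype.sum_bool, hξ]
  have hw0 : ∀ a, 0 ≤ w a := fun a => prod_nonneg fun k _ => hξ0 _
  have hlit : ∀ i j, ξ (lit i j) ≤ ∑ a with ∃ j, a (lit i j).1 = (lit i j).2, w a := by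
    intro i j
    calc ξ (lit i j) = ∑ a with a (lit i j).1 = (lit i j).2, w a :=
          (sum_filter_apply_eq_prod (p := fun k b => ξ (k, b)) hp _ _).symm
      _ ≤ _ := sum_le_sum_of_subset_of_nonneg
          (fun a => by simp only [mem_filter, mem_univ, true_and]; exact fun ha => ⟨j, ha⟩)
          fun a _ _ => hw0 a
  obtain ⟨a, ha⟩ := Finite.exists_max sat
  refine ⟨a, ?_⟩
  calc ∑ i, ⨆ j, ξ (lit i j)
      ≤ ∑ i, ∑ b with ∃ j, b (lit i j).1 = (lit i j).2, w b :=
        sum_le_sum fun i _ => ciSup_le (hlit i)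
    _ = ∑ b, (sat b : ℝ) * w b := by
        simp only [sum_filter]
        rw [sum_comm]
        refine sum_congr rfl fun b _ => ?_
        simp only [sat, card_filter, Nat.cast_sum, Nat.cast_ite, Nat.cast_one, Nat.cast_zero,
          sum_mul, ite_mul, one_mul, zero_mul]
        congr!
    _ ≤ ∑ b, (sat a : ℝ) * w b :=
        sum_le_sum fun b _ => mul_le_mul_of_nonneg_right (by exact_mod_cast ha b) (hw0 b)
    _ = sat a := by rw [← mul_sum, sum_prod_apply_eq_one hp, mul_one]

lemma exists_le_sum_eq {ι : Type*} [Fintype ι] {c : ι → ℝ} (hc : ∀ i, 0 ≤ c i) {D : ℝ}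
    (hD0 : 0 ≤ D) (hD : D ≤ ∑ i, c i) :
    ∃ x : ι → ℝ, (∀ i, 0 ≤ x i ∧ x i ≤ c i) ∧ ∑ i, x i = D := by
  rcases (sum_nonneg fun i _ => hc i).eq_or_lt with h | h
  · exact ⟨0, fun i => ⟨le_rfl, hc i⟩, by simp only [Pi.zero_apply, sum_const_zero]; linarith⟩
  · have hratio : D / ∑ i, c i ≤ 1 := (div_le_one h).2 hD
    refine ⟨fun i => D / (∑ i, c i) * c i, fun i => ⟨by have := hc i; positivity,
      mul_le_of_le_one_left (hc i) hratio⟩, ?_⟩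
    rw [← mul_sum, div_mul_cancel₀ _ h.ne']

section G1

variable {m : ℕ}

lemma g1src_ne_g1dst (e : Fin m × Fin 3) : g1src m e ≠ g1dst m e := by
  obtain ⟨i, ⟨j, hj⟩⟩ := e
  interval_cases j <;> simp [g1src, g1dst]

/-- The potential of the `s`–`t` cut that crosses path `i` at the edge `e_{i, j i}`. -/
def cutPotential (j : Fin m → Fin 3) : Bool ⊕ (Fin m × Fin 2) → ℝ
  | Sum.inl b => if b then 1 else 0
  | Sum.inr p => if (j p.1).val ≤ p.2.val then 1 else 0

lemma cutPotential_g1dst_sub_g1src (j : Fin m → Fin 3) (e : Fin m × Fin 3) :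
    cutPotential j (g1dst m e) - cutPotential j (g1src m e) = if e.2 = j e.1 then 1 else 0 := by
  obtain ⟨i, ⟨k, hk⟩⟩ := e
  have hj := (j i).isLt
  interval_cases k <;> interval_cases h : (j i).val <;>
    simp [g1src, g1dst, cutPotential, Fin.ext_iff, h]

lemma le_sum_cut_of_mem_Uset_D1 {ρ : ℝ} (hρ1 : ρ < 1) {r : ℕ}
    {lit : Fin m → Fin 3 → Fin r × Bool} {a : Fin r → Bool} {j : Fin m → Fin 3}
    (hj : ∀ i, a (lit i (j i)).1 = (lit i (j i)).2)
    {u : Fin m × Fin 3 → ℝ} (hu : u ∈ Uset (g1src m) (g1dst m) (g1s m) (g1t m) (D1 m r ρ lit)) :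
    m * (1 - ρ) + m ≤ ∑ i, u (i, j i) := by
  let ξ : Fin r × Bool → ℝ := fun l => if a l.1 = l.2 then 1 else 0
  let d : Option (Fin m × Fin 3) → ℝ := fun h => h.elim (m * (1 - ρ)) fun p => ξ (lit p.1 p.2)
  have hd : d ∈ D1 m r ρ lit := by
    refine ⟨ξ, fun l => ?_, fun k => ?_, fun i j => rfl, ?_, le_rfl⟩
    · by_cases h : a l.1 = l.2 <;> simp [ξ, h]
    · cases h : a k <;> simp [ξ, h]
    · exact mul_nonneg m.cast_nonneg (by linarith)
  obtain ⟨f, hf⟩ := hu.2 d hd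
  have hcut := cutPotential_g1dst_sub_g1src j
  have habs : ∀ e, |cutPotential j (g1dst m e) - cutPotential j (g1src m e)|
      = if e.2 = j e.1 then 1 else 0 := fun e => by rw [hcut]; split_ifs <;> simp
  calc (m : ℝ) * (1 - ρ) + m
      = ∑ h, d h * (cutPotential j (g1t m h) - cutPotential j (g1s m h)) := by
        rw [Fintype.sum_option]
        simp only [g1s, g1t, hcut]
        simp [cutPotential, d, ξ, Fintype.sum_prod_type, hj]
    _ ≤ ∑ e, |cutPotential j (g1dst m e) - cutPotential j (g1src m e)| * u e :=
        hf.sum_mul_potential_sub_le _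
    _ = ∑ i, u (i, j i) := by
        simp [habs, Fintype.sum_prod_type]

def pathFlow (x : Fin m → ℝ) (e : Fin m × Fin 3) (b : Bool) : ℝ := if b then x e.1 else 0

lemma netOut_pathFlow_internal (x : Fin m → ℝ) (i : Fin m) (k : Fin 2) :
    netOut (g1src m) (g1dst m) (pathFlow x) (Sum.inr (i, k)) = 0 := by
  unfold netOut pathFlow
  rw [Fintype.sum_prod_type]
  refine sum_eq_zero fun i' _ => ?_
  obtain ⟨k, hk⟩ := k
  by_cases hi : i' = i <;> interval_cases k <;>
    simp +decide [Fin.sum_univ_three, g1src, g1dst, hi]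

lemma netOut_pathFlow_source (x : Fin m → ℝ) :
    netOut (g1src m) (g1dst m) (pathFlow x) (Sum.inl false) = ∑ i, x i := by
  unfold netOut pathFlow
  rw [Fintype.sum_prod_type]
  exact sum_congr rfl fun i _ => by simp [Fin.sum_univ_three, g1src, g1dst]

def clauseRouting (x : Fin m → ℝ) (d : Option (Fin m × Fin 3) → ℝ) :
    Option (Fin m × Fin 3) → Fin m × Fin 3 → Bool → ℝ
  | none => pathFlow x
  | some p => fun e b => if e = p ∧ b = true then d (some p) else 0

lemma isRouting_clauseRouting {x : Fin m → ℝ} {d : Option (Fin m × Fin 3) → ℝ}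
    {u : Fin m × Fin 3 → ℝ} (hx0 : ∀ i, 0 ≤ x i) (hd0 : ∀ p, 0 ≤ d (some p))
    (hx : ∑ i, x i = d none) (hu : ∀ i j, x i + d (some (i, j)) ≤ u (i, j)) :
    IsRouting (g1src m) (g1dst m) (g1s m) (g1t m) d u (clauseRouting x d) := by
  refine ⟨?_, ?_, ?_, fun e => ?_⟩
  · rintro (_ | p) e b <;> dsimp only [clauseRouting, pathFlow] <;> split_ifs <;> simp [hx0, hd0]
  · rintro (_ | p) v hvs hvt
    · rcases v with b | ⟨i, k⟩
      · cases b <;> contradiction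
      · exact netOut_pathFlow_internal x i k
    · simp only [g1s, g1t] at hvs hvt
      simp [clauseRouting, netOut_single, Ne.symm hvs, Ne.symm hvt]
  · rintro (_ | p)
    · exact (netOut_pathFlow_source x).trans hx
    · simp [clauseRouting, netOut_single, g1s, (g1src_ne_g1dst p).symm]
  · simpa [clauseRouting, pathFlow, Fintype.sum_option] using hu e.1 e.2

lemma one_mem_Uset_D1 {ρ : ℝ} {r : ℕ} {lit : Fin m → Fin 3 → Fin r × Bool}
    (hval : ∀ a : Fin r → Bool, (#{i | ∃ j, a (lit i j).1 = (lit i j).2} : ℝ) < ρ * m) :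
    (fun _ => 1) ∈ Uset (g1src m) (g1dst m) (g1s m) (g1t m) (D1 m r ρ lit) := by
  refine ⟨fun _ => zero_le_one, ?_⟩
  rintro d ⟨ξ, hξ01, hξ, hdξ, hd0, hdle⟩
  let σ : Fin m → ℝ := fun i => ⨆ j, ξ (lit i j)
  have hlit : ∀ i j, ξ (lit i j) ≤ σ i := fun i j =>
    le_ciSup (f := fun j => ξ (lit i j)) (Finite.bddAbove_range _) j
  have hσ1 : ∀ i, σ i ≤ 1 := fun i => ciSup_le fun j => (hξ01 _).2
  obtain ⟨a, ha⟩ := exists_assignment_sum_iSup_le_card lit (fun l => (hξ01 l).1) hξ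
  have hσ : ∑ i, σ i < ρ * m := lt_of_le_of_lt ha (hval a)
  have hspare : d none ≤ ∑ i, (1 - σ i) := by
    simp only [sum_sub_distrib, sum_const, card_univ, Fintype.card_fin, nsmul_eq_mul, mul_one]
    linarith
  obtain ⟨x, hx, hxsum⟩ := exists_le_sum_eq (fun i => sub_nonneg.2 (hσ1 i)) hd0 hspare
  refine ⟨clauseRouting x d, isRouting_clauseRouting (fun i => (hx i).1)
    (fun p => hdξ p.1 p.2 ▸ (hξ01 _).1) hxsum fun i j => ?_⟩
  rw [hdξ]
  linarith [(hx i).2, hlit i j]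

end G1

theorem gap_reduction_base_general
    (ρ : ℝ) (hρ1 : ρ < 1)
    (m r : ℕ) (hm : 1 ≤ m) (lit : Fin m → Fin 3 → Fin r × Bool) :
    ((∃ a : Fin r → Bool, ∀ i : Fin m, ∃ j : Fin 3, a (lit i j).1 = (lit i j).2) →
      ∀ u ∈ Uset (g1src m) (g1dst m) (g1s m) (g1t m) (D1 m r ρ lit),
        2 - ρ ≤ ⨆ e : Fin m × Fin 3, u e / 1) ∧
    ((∀ a : Fin r → Bool,
        ((Finset.univ.filter
          (fun i : Fin m => ∃ j : Fin 3, a (lit i j).1 = (lit i j).2)).card : ℝ)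
          < ρ * m) →
      (fun _ : Fin m × Fin 3 => (1 : ℝ)) ∈
        Uset (g1src m) (g1dst m) (g1s m) (g1t m) (D1 m r ρ lit)) := by
  refine ⟨fun ⟨a, ha⟩ u hu => ?_, one_mem_Uset_D1⟩
  choose j hj using ha
  have hcut := le_sum_cut_of_mem_Uset_D1 hρ1 hj hu
  have hsum : ∑ _i : Fin m, (2 - ρ) ≤ ∑ i, u (i, j i) := by
    simp only [sum_const, card_univ, Fintype.card_fin, nsmul_eq_mul]
    linarith
  obtain ⟨i, -, hi⟩ := exists_le_of_sum_le (univ_nonempty_iff.2 ⟨(⟨0, hm⟩ : Fin m)⟩) hsum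
  calc 2 - ρ ≤ u (i, j i) / 1 := by rwa [div_one]
    _ ≤ ⨆ e, u e / 1 := le_ciSup (f := fun e => u e / 1) (Finite.bddAbove_range _) (i, j i)

/-- **Gap construction, base case (`γ = 1`).**
With unit capacities on all edges:
(a) if the formula is satisfiable, every feasible reservation for `D₁` has
congestion at least `2 - ρ = 1 + (1 - ρ)`;
(b) if every truth assignment satisfies fewer than `ρ·m` clauses, the all-ones
reservation is feasible for `D₁`, i.e. the minimum congestion is at most `1`. -/
theorem gap_reduction_base
    (ρ : ℝ) (hρ0 : 0 < ρ) (hρ1 : ρ < 1)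
    (m r : ℕ) (hm : 1 ≤ m) (lit : Fin m → Fin 3 → Fin r × Bool) :
    ((∃ a : Fin r → Bool, ∀ i : Fin m, ∃ j : Fin 3, a (lit i j).1 = (lit i j).2) →
      ∀ u ∈ Uset (g1src m) (g1dst m) (g1s m) (g1t m) (D1 m r ρ lit),
        2 - ρ ≤ ⨆ e : Fin m × Fin 3, u e / 1) ∧
    ((∀ a : Fin r → Bool,
        ((Finset.univ.filter
          (fun i : Fin m => ∃ j : Fin 3, a (lit i j).1 = (lit i j).2)).card : ℝ)
          < ρ * m) →
      (fun _ : Fin m × Fin 3 => (1 : ℝ)) ∈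
        Uset (g1src m) (g1dst m) (g1s m) (g1t m) (D1 m r ρ lit)) :=
  gap_reduction_base_general ρ hρ1 m r hm lit
end

section
/- Let D ⊆ ℝ^k be a nonempty convex set, let r ∈ ℕ, let J be a finite index set, and for each j ∈ J fix a coordinate v(j) ∈ {1,…,r} and a sign ε(j) ∈ {0,1}. Define P = { (ξ, (d^j)_{j∈J}) ∈ ℝ^r × (ℝ^k)^J : 0 ≤ ξ_i ≤ 1 for all i ∈ {1,…,r}, and for each j ∈ J, d^j ∈ σ_j(ξ)·D, where σ_j(ξ) = ξ_{v(j)} if ε(j) = 1 and σ_j(ξ) = 1 − ξ_{v(j)} if ε(j) = 0 }, where t·D = {t·d : d ∈ D}. Then P is convex, and every extreme point (ξ, (d^j)) of P satisfies ξ_i ∈ {0,1} for every i ∈ {1,…,r}. -/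
/-
Convexity holds because each factor `σ_j(ξ)` is an affine function of `ξ`, nonnegative on the cube,
and `s • D + t • D = (s + t) • D` for convex `D` and `s, t ≥ 0`. For the extreme points, write
`d^j = σ_j(ξ) • e_j` with `e_j ∈ D` and keep the `e_j` fixed: `ξ ↦ (ξ, (σ_j(ξ) • e_j)_j)` is an
injective affine map from the cube `[0,1]^r` into `P` hitting the given point, so an extreme point of
`P` lies over an extreme point of the cube, i.e. over a 0-1 vector.
-/

open scoped Pointwise

/-- The polytope `P` of pairs `(ξ, (d^j)_{j ∈ J})` with `0 ≤ ξ_i ≤ 1` and, for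
each `j`, `d^j ∈ σ_j(ξ) • D` where `σ_j(ξ) = ξ_{v j}` if `ε j = true` and
`σ_j(ξ) = 1 - ξ_{v j}` otherwise. -/
def scaledCopiesSet {k r : ℕ} {J : Type*} (D : Set (Fin k → ℝ))
    (v : J → Fin r) (ε : J → Bool) : Set ((Fin r → ℝ) × (J → Fin k → ℝ)) :=
  {p | (∀ i, 0 ≤ p.1 i ∧ p.1 i ≤ 1) ∧
       ∀ j, p.2 j ∈ (if ε j then p.1 (v j) else 1 - p.1 (v j)) • D}

open Set

/-- The factor `σ_j(ξ) = scaleFactor (ε j) (ξ (v j))` of `scaledCopiesSet`. -/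
def scaleFactor (c : Bool) (t : ℝ) : ℝ := if c then t else 1 - t

lemma scaleFactor_nonneg (c : Bool) {t : ℝ} (ht : t ∈ Icc (0 : ℝ) 1) : 0 ≤ scaleFactor c t := by
  unfold scaleFactor
  split <;> linarith [ht.1, ht.2]

lemma scaleFactor_add (c : Bool) {a b : ℝ} (hab : a + b = 1) (s t : ℝ) :
    scaleFactor c (a * s + b * t) = a * scaleFactor c s + b * scaleFactor c t := by
  unfold scaleFactor
  split
  · ring
  · linear_combination -hab

lemma scaleFactor_smul_eq_lineMap {E : Type*} [AddCommGroup E] [Module ℝ E] (c : Bool) (t : ℝ)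
    (e : E) :
    scaleFactor c t • e = cond c (AffineMap.lineMap 0 e) (AffineMap.lineMap e 0) t := by
  cases c <;> simp [scaleFactor, AffineMap.lineMap_apply_module, sub_smul]

lemma Convex.smul_add_smul_mem_smul {E : Type*} [AddCommGroup E] [Module ℝ E] {D : Set E}
    (hD : Convex ℝ D) {a b s t : ℝ} (ha : 0 ≤ a) (hb : 0 ≤ b) (hs : 0 ≤ s) (ht : 0 ≤ t) {x y : E}
    (hx : x ∈ s • D) (hy : y ∈ t • D) : a • x + b • y ∈ (a * s + b * t) • D := by
  rw [hD.add_smul (by positivity) (by positivity), mul_smul, mul_smul]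
  exact add_mem_add (smul_mem_smul_set hx) (smul_mem_smul_set hy)

lemma mem_extremePoints_of_injective_affineMap {𝕜 E F : Type*} [Ring 𝕜] [PartialOrder 𝕜]
    [IsOrderedRing 𝕜] [AddCommGroup E] [Module 𝕜 E] [AddCommGroup F] [Module 𝕜 F]
    {A : Set E} {B : Set F} {x : E}
    (f : E →ᵃ[𝕜] F) (hf : Function.Injective f) (hfA : MapsTo f A B) (hx : x ∈ A)
    (hfx : f x ∈ B.extremePoints 𝕜) : x ∈ A.extremePoints 𝕜 := by
  refine ⟨hx, fun x₁ hx₁ x₂ hx₂ hseg => ?_⟩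
  have hfseg : f x ∈ openSegment 𝕜 (f x₁) (f x₂) := by
    rw [← image_openSegment]
    exact mem_image_of_mem f hseg
  exact hf (hfx.2 (hfA hx₁) (hfA hx₂) hfseg)

section ScaledCopies

variable {k r : ℕ} {J : Type*} {D : Set (Fin k → ℝ)} {v : J → Fin r} {ε : J → Bool}

lemma mem_scaledCopiesSet_iff {p : (Fin r → ℝ) × (J → Fin k → ℝ)} :
    p ∈ scaledCopiesSet D v ε ↔
      p.1 ∈ univ.pi (fun _ => Icc 0 1) ∧ ∀ j, p.2 j ∈ scaleFactor (ε j) (p.1 (v j)) • D := by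
  simp only [scaledCopiesSet, scaleFactor, mem_ofPred_eq, mem_univ_pi, mem_Icc]

lemma convex_scaledCopiesSet (hD : Convex ℝ D) : Convex ℝ (scaledCopiesSet D v ε) := by
  intro p hp q hq a b ha hb hab
  rw [mem_scaledCopiesSet_iff] at hp hq ⊢
  refine ⟨convex_pi (fun _ _ => convex_Icc 0 1) hp.1 hq.1 ha hb hab, fun j => ?_⟩
  simpa [scaleFactor_add (ε j) hab] using
    hD.smul_add_smul_mem_smul ha hb (scaleFactor_nonneg _ (hp.1 (v j) trivial))
      (scaleFactor_nonneg _ (hq.1 (v j) trivial)) (hp.2 j) (hq.2 j)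

def scaledLift (v : J → Fin r) (ε : J → Bool) (e : J → Fin k → ℝ) :
    (Fin r → ℝ) →ᵃ[ℝ] (Fin r → ℝ) × (J → Fin k → ℝ) :=
  (AffineMap.id ℝ _).prod <| AffineMap.pi fun j =>
    (cond (ε j) (AffineMap.lineMap 0 (e j)) (AffineMap.lineMap (e j) 0)).comp
      (LinearMap.proj (v j)).toAffineMap

lemma scaledLift_apply (e : J → Fin k → ℝ) (ξ : Fin r → ℝ) :
    scaledLift v ε e ξ = (ξ, fun j => scaleFactor (ε j) (ξ (v j)) • e j) := by
  simp only [scaledLift, AffineMap.prod_apply, AffineMap.coe_id, id_eq,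
    scaleFactor_smul_eq_lineMap]
  rfl

lemma scaledLift_injective (e : J → Fin k → ℝ) : Function.Injective (scaledLift v ε e) :=
  fun ξ η h => by simpa [scaledLift_apply] using congrArg Prod.fst h

lemma mapsTo_scaledLift {e : J → Fin k → ℝ} (he : ∀ j, e j ∈ D) :
    MapsTo (scaledLift v ε e) (univ.pi fun _ => Icc 0 1) (scaledCopiesSet D v ε) := by
  intro ξ hξ
  rw [mem_scaledCopiesSet_iff, scaledLift_apply]
  exact ⟨hξ, fun j => smul_mem_smul_set (he j)⟩

lemma fst_mem_extremePoints_cube {p : (Fin r → ℝ) × (J → Fin k → ℝ)}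
    (hp : p ∈ (scaledCopiesSet D v ε).extremePoints ℝ) :
    p.1 ∈ (univ.pi fun _ => Icc (0 : ℝ) 1).extremePoints ℝ := by
  have hpP := mem_scaledCopiesSet_iff.1 hp.1
  choose e he hpe using hpP.2
  have hlift : scaledLift v ε e p.1 = p := by
    rw [scaledLift_apply]
    exact Prod.ext rfl (funext hpe)
  exact mem_extremePoints_of_injective_affineMap (scaledLift v ε e) (scaledLift_injective e)
    (mapsTo_scaledLift he) hpP.1 (hlift ▸ hp)

end ScaledCopies

theorem scaledCopiesSet_convex_extremePoints_zero_one_general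
    {k r : ℕ} {J : Type*}
    (D : Set (Fin k → ℝ)) (hDconv : Convex ℝ D)
    (v : J → Fin r) (ε : J → Bool) :
    Convex ℝ (scaledCopiesSet D v ε) ∧
      ∀ p ∈ Set.extremePoints ℝ (scaledCopiesSet D v ε),
        ∀ i, p.1 i = 0 ∨ p.1 i = 1 := by
  refine ⟨convex_scaledCopiesSet hDconv, fun p hp i => ?_⟩
  have hcube := fst_mem_extremePoints_cube hp
  rw [extremePoints_pi] at hcube
  simpa [extremePoints_Icc zero_le_one] using hcube i (mem_univ i)

/-- **The set `P` is convex and all its extreme points have 0-1 coordinates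
`ξ_i`.**  Here `D ⊆ ℝ^k` is a nonempty convex set, `J` a finite index set, and
for each `j ∈ J` the scaling factor is `ξ_{v j}` or `1 - ξ_{v j}` according to
the sign `ε j`. -/
theorem scaledCopiesSet_convex_extremePoints_zero_one
    {k r : ℕ} {J : Type*} [Fintype J]
    (D : Set (Fin k → ℝ)) (hDne : D.Nonempty) (hDconv : Convex ℝ D)
    (v : J → Fin r) (ε : J → Bool) :
    Convex ℝ (scaledCopiesSet D v ε) ∧
      ∀ p ∈ Set.extremePoints ℝ (scaledCopiesSet D v ε),
        ∀ i, p.1 i = 0 ∨ p.1 i = 1 :=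
  scaledCopiesSet_convex_extremePoints_zero_one_general D hDconv v ε
end

section
/- Fix ρ ∈ (0,1) and a 3-CNF formula φ with m ≥ 1 clauses over variables x_1,…,x_r. Define the instance (G', H', D') with path-restricted routing: G' has vertices s_1, t_1 and, for each clause i, four vertices a_i, w_{i,1}, w_{i,2}, b_i joined by edges e_{i,1}={a_i,w_{i,1}}, e_{i,2}={w_{i,1},w_{i,2}}, e_{i,3}={w_{i,2},b_i} of capacity 1, an edge e_0 = {s_1,t_1} of capacity mρ, and connector edges {a_i, s_1} and {t_1, b_i} of capacity 2m. The commodities are: h_{i,j} with endpoints those of e_{i,j}, allowed to use only the single-edge path (e_{i,j}); and h_{i,0} with endpoints a_i and b_i, allowed to use only the two paths P_i = (e_{i,1},e_{i,2},e_{i,3}) and Q_i = ({a_i,s_1}, e_0, {t_1,b_i}). The demand set is D' = { d : ∃ ξ ∈ [0,1]^{literals} with ξ(x_k)+ξ(¬x_k) = 1 ∀k, d_{h_{i,j}} = ξ(l_{i,j}) ∀ i,j∈{1,2,3}, and d_{h_{i,0}} = 1 ∀i }. Then: (a) if val(φ) < ρ, every d ∈ D' admits a path-restricted routing with congestion at most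 1; and (b) if val(φ) = 1, every reservation u under which all of D' is routable by path-restricted routings has congestion at least 2/(1+ρ). In particular, each commodity can be routed along at most two given paths, yet the minimum congestion exhibits a multiplicative gap of 2/(1+ρ) between the two cases. -/
open scoped BigOperators

/-- Path-restricted routability: each commodity `h` may only use the paths in
`paths h` (a path being recorded by its edge set); a routing of `d` under `u`
assigns a nonnegative flow value to each allowed path of each commodity so that
the values of the paths of `h` sum to `d h` and the total value of all paths
containing an edge `e` is at most `u e`. -/
def PathRoutable {E H : Type*} [Fintype H] [DecidableEq E]
    (paths : H → Finset (Finset E)) (d : H → ℝ) (u : E → ℝ) : Prop :=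
  ∃ f : H → Finset E → ℝ,
    (∀ h p, 0 ≤ f h p) ∧
    (∀ h p, p ∉ paths h → f h p = 0) ∧
    (∀ h, (∑ p ∈ paths h, f h p) = d h) ∧
    (∀ e, (∑ h, ∑ p ∈ (paths h).filter (fun p => e ∈ p), f h p) ≤ u e)

/-- Edges of the graph `G'`: `Sum.inl (i, j)` is the clause edge `e_{i,j+1}`,
`Sum.inr (Sum.inl ())` is the edge `e₀ = {s₁, t₁}`, and `Sum.inr (Sum.inr
(i, false))` (resp. `(i, true)`) is the connector edge `{a_i, s₁}` (resp.
`{t₁, b_i}`). -/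
abbrev TwoPathEdge (m : ℕ) : Type := (Fin m × Fin 3) ⊕ (Unit ⊕ (Fin m × Bool))

/-- Capacities of `G'`: clause edges have capacity `1`, the edge `e₀` has
capacity `m·ρ`, and the connector edges have capacity `2m`. -/
noncomputable def twoPathCap (m : ℕ) (ρ : ℝ) : TwoPathEdge m → ℝ
  | Sum.inl _ => 1
  | Sum.inr (Sum.inl _) => (m : ℝ) * ρ
  | Sum.inr (Sum.inr _) => 2 * (m : ℝ)

/-- Commodities of `G'`: `Sum.inl (i, j)` is `h_{i,j+1}` and `Sum.inr i` is
`h_{i,0}`. -/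
abbrev TwoPathCom (m : ℕ) : Type := (Fin m × Fin 3) ⊕ Fin m

/-- Allowed paths: commodity `h_{i,j}` may only use the single-edge path
`(e_{i,j})`; commodity `h_{i,0}` may only use `P_i = (e_{i,1}, e_{i,2},
e_{i,3})` or `Q_i = ({a_i, s₁}, e₀, {t₁, b_i})`. -/
def twoPathPaths (m : ℕ) : TwoPathCom m → Finset (Finset (TwoPathEdge m))
  | Sum.inl (i, j) => {{Sum.inl (i, j)}}
  | Sum.inr i =>
      { {Sum.inl (i, 0), Sum.inl (i, 1), Sum.inl (i, 2)},
        {Sum.inr (Sum.inl ()), Sum.inr (Sum.inr (i, false)),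
          Sum.inr (Sum.inr (i, true))} }

/-- The demand set `D'`: demands of the commodities `h_{i,j}` are given by
fractional literal values `ξ` with `ξ(x_k) + ξ(¬x_k) = 1` (where `lit i j`
encodes the literal `l_{i,j}`), and each commodity `h_{i,0}` has demand `1`. -/
def twoPathD (m r : ℕ) (lit : Fin m → Fin 3 → Fin r × Bool) :
    Set (TwoPathCom m → ℝ) :=
  {d | ∃ ξ : Fin r × Bool → ℝ,
        (∀ l, 0 ≤ ξ l ∧ ξ l ≤ 1) ∧
        (∀ k : Fin r, ξ (k, true) + ξ (k, false) = 1) ∧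
        (∀ i j, d (Sum.inl (i, j)) = ξ (lit i j)) ∧
        (∀ i, d (Sum.inr i) = 1)}

/-!
(a) Given fractional literal values `ξ`, put `M i = ⨆ j, ξ (lit i j)` and route `h_{i,0}` with
value `M i` on `Q_i` and `1 - M i` on `P_i`. A clause edge then carries `ξ (lit i j) + 1 - M i ≤ 1`
and `e₀` carries `∑ i, M i`. Drawing each variable independently with `P(x_k = b) = ξ (k, b)`,
clause `i` is satisfied with probability at least `M i`, so `∑ i, M i` is at most the expected
number of satisfied clauses, which is `< ρ m`.

(b) Fix a satisfying assignment and the corresponding `0/1` demand. If every edge carries at most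
`C` times its capacity, each clause `i` has a literal edge already loaded with `1`, so `P_i`
carries at most `C - 1` and `Q_i` at least `2 - C`. All `Q_i` pass through `e₀`, whence
`m (2 - C) ≤ C m ρ`, i.e. `C ≥ 2 / (1 + ρ)`.
-/

open Finset

section ProductWeight

variable {α β : Type*} [Fintype α] [DecidableEq α] [Fintype β] (ξ : α × β → ℝ)

theorem sum_prod_eq_one (hξ : ∀ k, ∑ b, ξ (k, b) = 1) :
    ∑ a : α → β, ∏ k, ξ (k, a k) = 1 := by
  rw [← Fintype.prod_sum (fun k b => ξ (k, b))]
  simp [hξ]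

theorem sum_ite_apply_eq_prod [DecidableEq β] (hξ : ∀ k, ∑ b, ξ (k, b) = 1) (k : α) (b : β) :
    ∑ a : α → β, (if a k = b then ∏ k', ξ (k', a k') else 0) = ξ (k, b) := by
  set g : α → β → ℝ := fun k' b' => if k' = k ∧ b' ≠ b then 0 else ξ (k', b')
  have hg : ∀ a : α → β, ∏ k', g k' (a k') = if a k = b then ∏ k', ξ (k', a k') else 0 := by
    intro a
    split_ifs with hab
    · exact prod_congr rfl fun k' _ => by grind
    · exact prod_eq_zero (mem_univ k) (by simp [g, hab])
  have hsum : ∀ k', ∑ b', g k' b' = if k' = k then ξ (k, b) else 1 := by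
    intro k'
    split_ifs with hk
    · subst hk; simp [g]
    · simp [g, hk, hξ]
  simp_rw [← hg, ← Fintype.prod_sum, hsum, prod_ite_eq', mem_univ, if_true]

theorem sum_iSup_le_of_forall_card_le [DecidableEq β] {ι κ : Type*} [Fintype ι] [Fintype κ]
    [Nonempty κ] (hξ0 : ∀ l, 0 ≤ ξ l) (hξ : ∀ k, ∑ b, ξ (k, b) = 1) (lit : ι → κ → α × β)
    (sat : (α → β) → ι → Prop) [∀ a, DecidablePred (sat a)]
    (hsat : ∀ a i j, a (lit i j).1 = (lit i j).2 → sat a i)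
    (B : ℝ) (hB : ∀ a, (#{i | sat a i} : ℝ) ≤ B) :
    ∑ i, ⨆ j, ξ (lit i j) ≤ B := by
  set w : (α → β) → ℝ := fun a => ∏ k, ξ (k, a k)
  have hw0 : ∀ a, 0 ≤ w a := fun a => prod_nonneg fun k _ => hξ0 _
  have hmarg : ∀ i, ⨆ j, ξ (lit i j) ≤ ∑ a, if sat a i then w a else 0 := by
    intro i
    obtain ⟨j, hj⟩ := exists_eq_ciSup_of_finite (f := fun j => ξ (lit i j))
    rw [← hj, ← sum_ite_apply_eq_prod ξ hξ]
    refine sum_le_sum fun a _ => ?_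
    by_cases hlit : a (lit i j).1 = (lit i j).2
    · rw [if_pos hlit, if_pos (hsat a i j hlit)]
    · rw [if_neg hlit]; split_ifs; exacts [hw0 a, le_rfl]
  calc ∑ i, ⨆ j, ξ (lit i j)
      ≤ ∑ i, ∑ a, if sat a i then w a else 0 := sum_le_sum fun i _ => hmarg i
    _ = ∑ a, (#{i | sat a i} : ℝ) * w a := by
      rw [sum_comm]
      simp_rw [← sum_filter, sum_const, nsmul_eq_mul]
    _ ≤ ∑ a, B * w a := sum_le_sum fun a _ => mul_le_mul_of_nonneg_right (hB a) (hw0 a)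
    _ = B := by rw [← mul_sum, sum_prod_eq_one ξ hξ, mul_one]

end ProductWeight

theorem le_ciSup_div_mul {ι : Type*} [Finite ι] (u c : ι → ℝ) {e : ι} (he : 0 < c e) :
    u e ≤ (⨆ e, u e / c e) * c e :=
  (div_le_iff₀ he).1 (le_ciSup (Finite.bddAbove_range fun e => u e / c e) e)

def pathLoad {E H : Type*} [Fintype H] [DecidableEq E]
    (paths : H → Finset (Finset E)) (f : H → Finset E → ℝ) (e : E) : ℝ :=
  ∑ h, ∑ p ∈ (paths h).filter (fun p => e ∈ p), f h p

namespace TwoPath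

variable {m : ℕ}

def pathP (i : Fin m) : Finset (TwoPathEdge m) :=
  {Sum.inl (i, 0), Sum.inl (i, 1), Sum.inl (i, 2)}

def pathQ (i : Fin m) : Finset (TwoPathEdge m) :=
  {Sum.inr (Sum.inl ()), Sum.inr (Sum.inr (i, false)), Sum.inr (Sum.inr (i, true))}

theorem paths_inl (x : Fin m × Fin 3) : twoPathPaths m (Sum.inl x) = {{Sum.inl x}} := rfl

theorem paths_inr (i : Fin m) : twoPathPaths m (Sum.inr i) = {pathP i, pathQ i} := rfl

theorem pathP_ne_pathQ (i : Fin m) : pathP i ≠ pathQ i := by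
  intro h
  have : (Sum.inl (i, 0) : TwoPathEdge m) ∈ pathQ i := h ▸ by simp [pathP]
  simp [pathQ] at this

theorem pathLoad_eq (f : TwoPathCom m → Finset (TwoPathEdge m) → ℝ) (e : TwoPathEdge m) :
    pathLoad (twoPathPaths m) f e =
      (∑ x, if e = Sum.inl x then f (Sum.inl x) {Sum.inl x} else 0) +
        ∑ i, ((if e ∈ pathP i then f (Sum.inr i) (pathP i) else 0) +
          (if e ∈ pathQ i then f (Sum.inr i) (pathQ i) else 0)) := by
  simp only [pathLoad, Fintype.sum_sum_type, paths_inl, paths_inr, sum_filter,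
    sum_pair (pathP_ne_pathQ _), sum_singleton, mem_singleton]

theorem pathLoad_clause (f : TwoPathCom m → Finset (TwoPathEdge m) → ℝ) (i : Fin m) (j : Fin 3) :
    pathLoad (twoPathPaths m) f (Sum.inl (i, j)) =
      f (Sum.inl (i, j)) {Sum.inl (i, j)} + f (Sum.inr i) (pathP i) := by
  rw [pathLoad_eq]
  simp only [Sum.inl.injEq, sum_ite_eq, mem_univ, if_true]
  fin_cases j <;> simp [pathP, pathQ, Prod.ext_iff, eq_comm]

theorem pathLoad_e₀ (f : TwoPathCom m → Finset (TwoPathEdge m) → ℝ) :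
    pathLoad (twoPathPaths m) f (Sum.inr (Sum.inl ())) = ∑ i, f (Sum.inr i) (pathQ i) := by
  rw [pathLoad_eq]
  simp [pathP, pathQ]

theorem pathLoad_connector (f : TwoPathCom m → Finset (TwoPathEdge m) → ℝ) (i : Fin m) (b : Bool) :
    pathLoad (twoPathPaths m) f (Sum.inr (Sum.inr (i, b))) = f (Sum.inr i) (pathQ i) := by
  rw [pathLoad_eq]
  cases b <;> simp [pathP, pathQ, Prod.ext_iff, eq_comm]

def flow (d : TwoPathCom m → ℝ) (q : Fin m → ℝ) : TwoPathCom m → Finset (TwoPathEdge m) → ℝ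
  | Sum.inl x, p => if p = {Sum.inl x} then d (Sum.inl x) else 0
  | Sum.inr i, p => if p = pathP i then 1 - q i else if p = pathQ i then q i else 0

theorem pathRoutable_flow (d : TwoPathCom m → ℝ) (q : Fin m → ℝ) (u : TwoPathEdge m → ℝ)
    (hd0 : ∀ x, 0 ≤ d (Sum.inl x)) (hbypass : ∀ i, d (Sum.inr i) = 1)
    (hq0 : ∀ i, 0 ≤ q i) (hq1 : ∀ i, q i ≤ 1)
    (hclause : ∀ i j, d (Sum.inl (i, j)) + (1 - q i) ≤ u (Sum.inl (i, j)))
    (he₀ : ∑ i, q i ≤ u (Sum.inr (Sum.inl ())))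
    (hconnector : ∀ i b, q i ≤ u (Sum.inr (Sum.inr (i, b)))) :
    PathRoutable (twoPathPaths m) d u := by
  have hPQ : ∀ i : Fin m, pathQ i ≠ pathP i := fun i => (pathP_ne_pathQ i).symm
  refine ⟨flow d q, ?_, ?_, ?_, ?_⟩
  · rintro (x | i) p
    · simp only [flow]; split_ifs <;> simp [hd0]
    · simp only [flow]; split_ifs <;> linarith [hq0 i, hq1 i]
  · rintro (x | i) p hp
    · simp_all [flow, paths_inl]
    · simp_all [flow, paths_inr]
  · rintro (x | i)
    · simp [flow, paths_inl]
    · simp [flow, paths_inr, sum_pair (pathP_ne_pathQ i), hPQ, hbypass]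
  · intro e
    change pathLoad _ (flow d q) e ≤ u e
    rcases e with ⟨i, j⟩ | ⟨⟨⟩⟩ | ⟨i, b⟩
    · simpa [pathLoad_clause, flow] using hclause i j
    · simpa [pathLoad_e₀, flow, hPQ] using he₀
    · simpa [pathLoad_connector, flow, hPQ] using hconnector i b

theorem mul_two_sub_le_e₀_of_pathRoutable (d : TwoPathCom m → ℝ) (u : TwoPathEdge m → ℝ)
    (hd : PathRoutable (twoPathPaths m) d u) (hbypass : ∀ i, d (Sum.inr i) = 1)
    (hsat : ∀ i, ∃ j, d (Sum.inl (i, j)) = 1) (c : ℝ)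
    (hc : ∀ i j, u (Sum.inl (i, j)) ≤ c) :
    m * (2 - c) ≤ u (Sum.inr (Sum.inl ())) := by
  obtain ⟨f, -, -, hfd, hload⟩ := hd
  have hQ : ∀ i, 2 - c ≤ f (Sum.inr i) (pathQ i) := by
    intro i
    obtain ⟨j, hj⟩ := hsat i
    have hPQ : f (Sum.inr i) (pathP i) + f (Sum.inr i) (pathQ i) = 1 := by
      simpa [paths_inr, sum_pair (pathP_ne_pathQ i), hbypass] using hfd (Sum.inr i)
    have hsingle : f (Sum.inl (i, j)) {Sum.inl (i, j)} = 1 := by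
      simpa [paths_inl, hj] using hfd (Sum.inl (i, j))
    have hclause : 1 + f (Sum.inr i) (pathP i) ≤ c := by
      rw [← hsingle, ← pathLoad_clause]
      exact (hload _).trans (hc i j)
    linarith
  calc (m : ℝ) * (2 - c)
      = ∑ _i : Fin m, (2 - c) := by rw [sum_const, card_univ, Fintype.card_fin, nsmul_eq_mul]
    _ ≤ ∑ i, f (Sum.inr i) (pathQ i) := sum_le_sum fun i _ => hQ i
    _ = pathLoad (twoPathPaths m) f (Sum.inr (Sum.inl ())) := (pathLoad_e₀ f).symm
    _ ≤ u (Sum.inr (Sum.inl ())) := hload _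

theorem pathRoutable_twoPathCap_of_forall_card_lt (ρ : ℝ) (r : ℕ)
    (lit : Fin m → Fin 3 → Fin r × Bool)
    (hval : ∀ a : Fin r → Bool, (#{i | ∃ j, a (lit i j).1 = (lit i j).2} : ℝ) < ρ * m) :
    ∀ d ∈ twoPathD m r lit, PathRoutable (twoPathPaths m) d (twoPathCap m ρ) := by
  rintro d ⟨ξ, hξ01, hξ, hdξ, hbypass⟩
  set M : Fin m → ℝ := fun i => ⨆ j, ξ (lit i j)
  have hle : ∀ i j, ξ (lit i j) ≤ M i := fun i j =>
    le_ciSup (Finite.bddAbove_range fun j => ξ (lit i j)) j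
  have hM1 : ∀ i, M i ≤ 1 := fun i => ciSup_le fun j => (hξ01 _).2
  have hsum : ∑ i, M i ≤ ρ * m :=
    sum_iSup_le_of_forall_card_le ξ (fun l => (hξ01 l).1) (by simp [hξ]) lit _
      (fun a i j h => ⟨j, h⟩) _ fun a => (hval a).le
  refine pathRoutable_flow d M _ (fun x => ?_) hbypass (fun i => (hξ01 _).1.trans (hle i 0)) hM1
    (fun i j => ?_) ?_ (fun i b => ?_)
  · rw [hdξ]; exact (hξ01 _).1
  · simp only [twoPathCap, hdξ]; linarith [hle i j]
  · simpa [twoPathCap, mul_comm] using hsum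
  · have hm : (1 : ℝ) ≤ m := by exact_mod_cast i.pos
    simp only [twoPathCap]; linarith [hM1 i]

def assignmentDemand {r : ℕ} (lit : Fin m → Fin 3 → Fin r × Bool) (a : Fin r → Bool) :
    TwoPathCom m → ℝ :=
  Sum.elim (fun x => if a (lit x.1 x.2).1 = (lit x.1 x.2).2 then 1 else 0) 1

theorem assignmentDemand_mem_twoPathD {r : ℕ} (lit : Fin m → Fin 3 → Fin r × Bool)
    (a : Fin r → Bool) : assignmentDemand lit a ∈ twoPathD m r lit := by
  refine ⟨fun l => if a l.1 = l.2 then 1 else 0, fun l => ?_, fun k => ?_, fun _ _ => rfl,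
    fun _ => rfl⟩
  · dsimp only; split_ifs <;> norm_num
  · cases h : a k <;> simp [h]

theorem div_one_add_le_congestion_of_satisfiable {ρ : ℝ} (hρ0 : 0 < ρ) (hm : 1 ≤ m) {r : ℕ}
    (lit : Fin m → Fin 3 → Fin r × Bool) (a : Fin r → Bool)
    (ha : ∀ i, ∃ j, a (lit i j).1 = (lit i j).2) (u : TwoPathEdge m → ℝ)
    (hroute : ∀ d ∈ twoPathD m r lit, PathRoutable (twoPathPaths m) d u) :
    2 / (1 + ρ) ≤ ⨆ e, u e / twoPathCap m ρ e := by
  set C := ⨆ e, u e / twoPathCap m ρ e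
  have hm0 : (0 : ℝ) < m := by exact_mod_cast hm
  have he₀ := mul_two_sub_le_e₀_of_pathRoutable _ u
    (hroute _ (assignmentDemand_mem_twoPathD lit a)) (fun _ => rfl)
    (fun i => (ha i).imp fun j hj => by simp [assignmentDemand, hj]) C
    fun i j =>
      (le_ciSup_div_mul u (twoPathCap m ρ) (e := Sum.inl (i, j)) one_pos).trans_eq (mul_one C)
  have hcap : u (Sum.inr (Sum.inl ())) ≤ C * (m * ρ) :=
    le_ciSup_div_mul u (twoPathCap m ρ) (e := Sum.inr (Sum.inl ())) (mul_pos hm0 hρ0)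
  have : 2 - C ≤ C * ρ := le_of_mul_le_mul_left (by linarith) hm0
  rw [div_le_iff₀ (by linarith)]
  linarith

end TwoPath

theorem twoPath_gap_general
    (ρ : ℝ) (hρ0 : 0 < ρ)
    (m r : ℕ) (hm : 1 ≤ m) (lit : Fin m → Fin 3 → Fin r × Bool) :
    ((∀ a : Fin r → Bool,
        ((Finset.univ.filter
          (fun i : Fin m => ∃ j : Fin 3, a (lit i j).1 = (lit i j).2)).card : ℝ)
          < ρ * m) →
      ∀ d ∈ twoPathD m r lit,
        PathRoutable (twoPathPaths m) d (twoPathCap m ρ)) ∧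
    ((∃ a : Fin r → Bool, ∀ i : Fin m, ∃ j : Fin 3, a (lit i j).1 = (lit i j).2) →
      ∀ u : TwoPathEdge m → ℝ, (∀ e, 0 ≤ u e) →
        (∀ d ∈ twoPathD m r lit, PathRoutable (twoPathPaths m) d u) →
        2 / (1 + ρ) ≤ ⨆ e, u e / twoPathCap m ρ e) := by
  exact ⟨TwoPath.pathRoutable_twoPathCap_of_forall_card_lt ρ r lit,
    fun ⟨a, ha⟩ u _ => TwoPath.div_one_add_le_congestion_of_satisfiable hρ0 hm lit a ha u⟩

/-- **Hardness of minimum congestion with at most two allowed paths per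
commodity.**  For the instance `(G', H', D')`:
(a) if every truth assignment satisfies fewer than `ρ·m` clauses, every
`d ∈ D'` admits a path-restricted routing with congestion at most `1` (i.e. it
is routable under the capacities themselves);
(b) if the formula is satisfiable, every reservation under which all of `D'` is
routable has congestion at least `2 / (1 + ρ)`. -/
theorem twoPath_gap
    (ρ : ℝ) (hρ0 : 0 < ρ) (hρ1 : ρ < 1)
    (m r : ℕ) (hm : 1 ≤ m) (lit : Fin m → Fin 3 → Fin r × Bool) :
    ((∀ a : Fin r → Bool,
        ((Finset.univ.filter
          (fun i : Fin m => ∃ j : Fin 3, a (lit i j).1 = (lit i j).2)).card : ℝ)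
          < ρ * m) →
      ∀ d ∈ twoPathD m r lit,
        PathRoutable (twoPathPaths m) d (twoPathCap m ρ)) ∧
    ((∃ a : Fin r → Bool, ∀ i : Fin m, ∃ j : Fin 3, a (lit i j).1 = (lit i j).2) →
      ∀ u : TwoPathEdge m → ℝ, (∀ e, 0 ≤ u e) →
        (∀ d ∈ twoPathD m r lit, PathRoutable (twoPathPaths m) d u) →
        2 / (1 + ρ) ≤ ⨆ e, u e / twoPathCap m ρ e) :=
  twoPath_gap_general ρ hρ0 m r hm lit
end
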